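/- There exists a bounded function K : ℝ → ℝ which is Riemann integrable on every bounded interval, and a continuous function f : [0,1] → ℝ, such that the composition K ∘ f is not Riemann integrable on [0,1]. -/

import Mathlib

open MeasureTheory

/-- Riemann integrability on a set via Lebesgue's criterion: bounded and the
set of discontinuity points within the set has measure zero. -/
def RiemannIntegrableOn (f : ℝ → ℝ) (A : Set ℝ) : Prop :=
  Bornology.IsBounded (f '' A) ∧ volume {x ∈ A | ¬ ContinuousWithinAt f A x} = 0

/-! Take `K` the indicator of `{0}`, discontinuous only at `0`. Removing from `[0,1]` an open
neighbourhood of its rationals of measure `< 1` leaves a closed set `D` of positive measure whose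
complement is dense in `[0,1]`. With `f = dist(·, D)`, the composite `K ∘ f` is the indicator of
`D`, which is discontinuous at every point of `D`. -/

open Set Metric

lemma abs_indicator_one_le {α : Type*} (s : Set α) (x : α) : |s.indicator (1 : α → ℝ) x| ≤ 1 := by
  by_cases hx : x ∈ s <;> simp [hx]

lemma riemannIntegrableOn_indicator_one {s : Set ℝ} (hs : volume (frontier s) = 0) (A : Set ℝ) :
    RiemannIntegrableOn (s.indicator 1) A := by
  refine ⟨isBounded_iff_forall_norm_le.2 ⟨1, ?_⟩, measure_mono_null ?_ hs⟩
  · rintro _ ⟨x, -, rfl⟩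
    exact abs_indicator_one_le s x
  · rintro x ⟨-, hx⟩
    by_contra hxs
    exact hx (continuousOn_const.continuousAt_indicator hxs).continuousWithinAt

lemma not_continuousWithinAt_indicator {α M : Type*} [TopologicalSpace α] [TopologicalSpace M]
    [T1Space M] [Zero M] {s A : Set α} {g : α → M} {x : α} (hxs : x ∈ s) (hgx : g x ≠ 0)
    (hx : x ∈ closure (A \ s)) : ¬ ContinuousWithinAt (s.indicator g) A x := by
  intro hcont
  have hmem := (hcont.mono sdiff_subset).mem_closure_image hx
  have himage : s.indicator g '' (A \ s) ⊆ {0} := by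
    rintro _ ⟨y, hy, rfl⟩
    exact indicator_of_notMem hy.2 g
  rw [indicator_of_mem hxs] at hmem
  exact hgx (closure_minimal himage isClosed_singleton hmem)

lemma not_riemannIntegrableOn_indicator_one {s A : Set ℝ} (hs : volume s ≠ 0) (hsA : s ⊆ A)
    (hdense : s ⊆ closure (A \ s)) : ¬ RiemannIntegrableOn (s.indicator 1) A := by
  refine fun hint ↦ hs (measure_mono_null (fun x hx ↦ ?_) hint.2)
  exact ⟨hsA hx, not_continuousWithinAt_indicator hx one_ne_zero (hdense hx)⟩

lemma Icc_subset_closure_inter_range_ratCast {a b : ℝ} (hab : a < b) :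
    Icc a b ⊆ closure (Icc a b ∩ range ((↑) : ℚ → ℝ)) := by
  calc Icc a b = closure (Ioo a b) := (closure_Ioo hab.ne).symm
    _ ⊆ closure (Ioo a b ∩ range ((↑) : ℚ → ℝ)) :=
      closure_minimal (Rat.denseRange_cast.open_subset_closure_inter isOpen_Ioo) isClosed_closure
    _ ⊆ closure (Icc a b ∩ range ((↑) : ℚ → ℝ)) :=
      closure_mono (inter_subset_inter_left _ Ioo_subset_Icc_self)

lemma exists_isOpen_superset_measure_diff_ne_zero {α : Type*} [TopologicalSpace α]
    [MeasurableSpace α] {μ : Measure α} [μ.OuterRegular] {A N : Set α} (hA : μ A ≠ 0)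
    (hN : μ N = 0) : ∃ U, N ⊆ U ∧ IsOpen U ∧ μ (A \ U) ≠ 0 := by
  obtain ⟨U, hNU, hU, hUA⟩ := N.exists_isOpen_lt_of_lt (μ A) (hN ▸ pos_iff_ne_zero.2 hA)
  refine ⟨U, hNU, hU, fun h ↦ hUA.not_ge ?_⟩
  exact tsub_eq_zero_iff_le.1 (nonpos_iff_eq_zero.1 (h ▸ le_measure_sdiff))

lemma exists_isClosed_subset_Icc_measure_ne_zero_subset_closure_diff {a b : ℝ} (hab : a < b) :
    ∃ D, IsClosed D ∧ D ⊆ Icc a b ∧ volume D ≠ 0 ∧ Icc a b ⊆ closure (Icc a b \ D) := by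
  have hQ : volume (Icc a b ∩ range ((↑) : ℚ → ℝ)) = 0 :=
    ((countable_range _).mono inter_subset_right).measure_zero _
  obtain ⟨U, hQU, hU, hD⟩ := exists_isOpen_superset_measure_diff_ne_zero
    (A := Icc a b) (by simpa [Real.volume_Icc] using hab) hQ
  refine ⟨Icc a b \ U, isClosed_Icc.sdiff hU, sdiff_subset, hD, ?_⟩
  refine (Icc_subset_closure_inter_range_ratCast hab).trans (closure_mono fun x hx ↦ ?_)
  exact ⟨hx.1, fun hxD ↦ hxD.2 (hQU hx)⟩

lemma indicator_zero_comp_infDist {D : Set ℝ} (hD : IsClosed D) (hne : D.Nonempty) :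
    ({0} : Set ℝ).indicator (1 : ℝ → ℝ) ∘ (infDist · D) = D.indicator 1 := by
  have hpre : (infDist · D) ⁻¹' {0} = D := ext fun _ ↦ (hD.mem_iff_infDist_zero hne).symm
  ext x
  rw [Function.comp_apply, ← indicator_comp_right (infDist · D), hpre]
  rfl

/-- There is a bounded function `K` that is Riemann integrable on every bounded
interval, and a continuous function `f` on `[0,1]`, such that `K ∘ f` is not
Riemann integrable on `[0,1]`. -/
theorem stmt3 : ∃ (K : ℝ → ℝ) (f : ℝ → ℝ),
    (∃ C, ∀ t, |K t| ≤ C) ∧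
    (∀ a b : ℝ, RiemannIntegrableOn K (Set.Icc a b)) ∧
    ContinuousOn f (Set.Icc 0 1) ∧
    ¬ RiemannIntegrableOn (K ∘ f) (Set.Icc 0 1) := by
  obtain ⟨D, hDclosed, hDsub, hDvol, hDdense⟩ :=
    exists_isClosed_subset_Icc_measure_ne_zero_subset_closure_diff zero_lt_one
  refine ⟨({0} : Set ℝ).indicator 1, (infDist · D), ⟨1, abs_indicator_one_le _⟩,
    fun a b ↦ riemannIntegrableOn_indicator_one ?_ _, (continuous_infDist_pt D).continuousOn, ?_⟩
  · exact measure_mono_null (frontier_subset_closure.trans closure_singleton.subset)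
      (measure_singleton 0)
  · rw [indicator_zero_comp_infDist hDclosed (nonempty_of_measure_ne_zero hDvol)]
    exact not_riemannIntegrableOn_indicator_one hDvol hDsub (hDsub.trans hDdense)
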